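/- Suppose that for all g ∈ {2, …, 𝒯}, all t with g ≤ t ≤ 𝒯, and all d ∈ 𝒟₊: E[Y_t(g, d) − Y_{t−1}(0) | G = g, D = d] = E[Y_t(g, d) − Y_{t−1}(0) | G = g] and E[Y_t(0) − Y_{t−1}(0) | G = g, D = d] = E[Y_t(0) − Y_{t−1}(0) | D = 0]. Then for every g ∈ {2, …, 𝒯}, every t with g ≤ t ≤ 𝒯, and every d ∈ 𝒟₊: ATE(g, t, d) = E[Y_t − Y_{g−1} | G = g, D = d] − E[Y_t − Y_{g−1} | D = 0]. -/

import Mathlib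

/-!
Split `Y_t − Y_{g−1}` at period `t − 1`. On `{G = g, D = d}` the observed change is
`(Y_t(g, d) − Y_{t−1}(0)) + (Y_{t−1}(0) − Y_{g−1}(0))`, on `{D = 0}` it is
`(Y_t(0) − Y_{t−1}(0)) + (Y_{t−1}(0) − Y_{g−1}(0))`. Parallel trends of the one-period increments
between `g − 1` and `t − 1` match the conditional means of the second summands. Since `{G = g}` is
the disjoint union of the dose cells `{G = g, D = d}`, on each of which `Y_t(0) − Y_{t−1}(0)` has
the conditional mean `E[Y_t(0) − Y_{t−1}(0) | D = 0]`, that is also its mean given `G = g`; the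
remaining difference is `E[Y_t(g, d) − Y_t(0) | G = g]`.
-/

open MeasureTheory

/-- Conditional expectation of `X` given the event `A`: `E[X | A] = E[X·1_A] / P(A)`. -/
noncomputable def cExp {Ω : Type*} [MeasurableSpace Ω] (P : Measure Ω)
    (X : Ω → ℝ) (A : Set Ω) : ℝ :=
  (∫ ω in A, X ω ∂P) / (P A).toReal

section cExp

variable {Ω : Type*} [MeasurableSpace Ω] {P : Measure Ω}

theorem cExp_sub {X Z : Ω → ℝ} (A : Set Ω) (hX : Integrable X P) (hZ : Integrable Z P) :
    cExp P (fun ω => X ω - Z ω) A = cExp P X A - cExp P Z A := by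
  rw [cExp, integral_sub hX.integrableOn hZ.integrableOn, sub_div, cExp, cExp]

theorem cExp_congr {X Z : Ω → ℝ} {A : Set Ω} (hA : MeasurableSet A) (h : Set.EqOn X Z A) :
    cExp P X A = cExp P Z A := by
  rw [cExp, setIntegral_congr_fun hA h, cExp]

theorem cExp_sub_add_sub_cancel {X W Z : Ω → ℝ} (A : Set Ω) (hX : Integrable X P)
    (hW : Integrable W P) (hZ : Integrable Z P) :
    cExp P (fun ω => X ω - W ω) A + cExp P (fun ω => W ω - Z ω) A =
      cExp P (fun ω => X ω - Z ω) A := by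
  rw [cExp_sub A hX hW, cExp_sub A hW hZ, cExp_sub A hX hZ]
  ring

theorem cExp_finset_sum {ι : Type*} (s : Finset ι) {X : ι → Ω → ℝ} (A : Set Ω)
    (hX : ∀ i ∈ s, Integrable (X i) P) :
    cExp P (fun ω => ∑ i ∈ s, X i ω) A = ∑ i ∈ s, cExp P (X i) A := by
  rw [cExp, integral_finsetSum s fun i hi => (hX i hi).integrableOn, Finset.sum_div]
  rfl

theorem cExp_sub_eq_sum_increments {X : ℕ → Ω → ℝ} (hX : ∀ i, Integrable (X i) P)
    (A : Set Ω) {s t : ℕ} (hst : s ≤ t) :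
    cExp P (fun ω => X t ω - X s ω) A =
      ∑ i ∈ Finset.Ico s t, cExp P (fun ω => X (i + 1) ω - X i ω) A := by
  have htelescope : (fun ω => X t ω - X s ω) =
      fun ω => ∑ i ∈ Finset.Ico s t, (X (i + 1) ω - X i ω) := by
    funext ω
    exact (Finset.sum_Ico_sub (fun i => X i ω) hst).symm
  rw [htelescope]
  exact cExp_finset_sum (X := fun i ω => X (i + 1) ω - X i ω) _ _ fun i _ =>
    (hX (i + 1)).sub (hX i)

theorem cExp_sub_eq_of_increments_eq {X : ℕ → Ω → ℝ} (hX : ∀ i, Integrable (X i) P)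
    {A B : Set Ω} {s t : ℕ} (hst : s ≤ t)
    (h : ∀ i ∈ Finset.Ico s t,
      cExp P (fun ω => X (i + 1) ω - X i ω) A = cExp P (fun ω => X (i + 1) ω - X i ω) B) :
    cExp P (fun ω => X t ω - X s ω) A = cExp P (fun ω => X t ω - X s ω) B := by
  rw [cExp_sub_eq_sum_increments hX A hst, cExp_sub_eq_sum_increments hX B hst]
  exact Finset.sum_congr rfl h

theorem cExp_biUnion_finset_of_forall_eq [IsFiniteMeasure P] {ι : Type*} {s : Finset ι}
    (hs : s.Nonempty) {A : ι → Set Ω} (hA : ∀ i ∈ s, MeasurableSet (A i))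
    (hdisj : (s : Set ι).PairwiseDisjoint A) {X : Ω → ℝ} (hX : IntegrableOn X (⋃ i ∈ s, A i) P)
    {c : ℝ} (h : ∀ i ∈ s, cExp P X (A i) = c) :
    cExp P X (⋃ i ∈ s, A i) = c := by
  have hcell : ∀ i ∈ s, ∫ ω in A i, X ω ∂P = c * (P (A i)).toReal := by
    intro i hi
    by_cases hnull : P (A i) = 0
    · simp [setIntegral_measure_zero _ hnull, hnull]
    · rw [← h i hi, cExp, div_mul_cancel₀]
      exact ENNReal.toReal_ne_zero.2 ⟨hnull, measure_ne_top P _⟩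
  by_cases hnull : P (⋃ i ∈ s, A i) = 0
  · -- a null cell has the junk conditional mean `0`, so `c = 0`
    obtain ⟨i, hi⟩ := hs
    have hnull_i : P (A i) = 0 := measure_mono_null (Set.subset_biUnion_of_mem hi) hnull
    rw [← h i hi, cExp, cExp, hnull, hnull_i, ENNReal.toReal_zero, div_zero, div_zero]
  · have hunion : ∫ ω in ⋃ i ∈ s, A i, X ω ∂P = c * (P (⋃ i ∈ s, A i)).toReal := by
      rw [integral_biUnion_finset s hA hdisj fun i hi => hX.mono_set (Set.subset_biUnion_of_mem hi),
        Finset.sum_congr rfl hcell, ← Finset.mul_sum, measure_biUnion_finset hdisj hA,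
        ENNReal.toReal_sum fun i _ => measure_ne_top P _]
    rw [cExp, hunion, mul_div_cancel_right₀]
    exact ENNReal.toReal_ne_zero.2 ⟨hnull, measure_ne_top P _⟩

end cExp

section DiD

variable {Ω : Type*} {T : ℕ} {Dpos : Finset ℝ} {D : Ω → ℝ} {G : Ω → ℕ}

theorem setOf_group_eq_biUnion_dose_cells (hDval : ∀ ω, D ω = 0 ∨ D ω ∈ Dpos)
    (hD0G : ∀ ω, D ω = 0 ↔ G ω = T + 1) {g : ℕ} (hg : g ≠ T + 1) :
    {ω | G ω = g} = ⋃ d ∈ Dpos, {ω | G ω = g ∧ D ω = d} := by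
  ext ω
  simp only [Set.mem_ofPred_eq, Set.mem_iUnion, exists_prop]
  constructor
  · intro hωG
    refine ⟨D ω, (hDval ω).resolve_left fun hω0 => hg ?_, hωG, rfl⟩
    rw [← hωG, ← hD0G ω]
    exact hω0
  · rintro ⟨d, -, hωG, -⟩
    exact hωG

theorem cExp_group_eq_of_forall_dose_cells [MeasurableSpace Ω] {P : Measure Ω}
    [IsFiniteMeasure P] (hD : Measurable D) (hG : Measurable G) (hDval : ∀ ω, D ω = 0 ∨ D ω ∈ Dpos)
    (hD0G : ∀ ω, D ω = 0 ↔ G ω = T + 1) {g : ℕ} (hg : g ≠ T + 1) (hDpos : Dpos.Nonempty)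
    {X : Ω → ℝ} (hX : Integrable X P) {c : ℝ}
    (h : ∀ d ∈ Dpos, cExp P X {ω | G ω = g ∧ D ω = d} = c) :
    cExp P X {ω | G ω = g} = c := by
  rw [setOf_group_eq_biUnion_dose_cells hDval hD0G hg]
  refine cExp_biUnion_finset_of_forall_eq hDpos
    (fun d _ => (hG (measurableSet_singleton g)).inter (hD (measurableSet_singleton d)))
    (fun d₁ _ d₂ _ hne => Set.disjoint_left.2 fun ω h₁ h₂ => hne (h₁.2.symm.trans h₂.2))
    hX.integrableOn h

variable {Y0 Y : ℕ → Ω → ℝ} {Ypo : ℕ → ℕ → ℝ → Ω → ℝ}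

theorem observed_sub_eqOn_dose_cell
    (hYobs : ∀ t ω, Y t ω = if t < G ω then Y0 t ω else Ypo t (G ω) (D ω) ω)
    {g s t : ℕ} (hsg : s < g) (hgt : g ≤ t) (d : ℝ) :
    Set.EqOn (fun ω => Y t ω - Y s ω) (fun ω => Ypo t g d ω - Y0 s ω)
      {ω | G ω = g ∧ D ω = d} := by
  rintro ω ⟨hωG, hωD⟩
  simp only [hYobs, hωG, hωD, if_neg (Nat.not_lt.2 hgt), if_pos hsg]

theorem observed_sub_eqOn_never_treated
    (hYobs : ∀ t ω, Y t ω = if t < G ω then Y0 t ω else Ypo t (G ω) (D ω) ω)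
    (hD0G : ∀ ω, D ω = 0 ↔ G ω = T + 1) {s t : ℕ} (hs : s ≤ T) (ht : t ≤ T) :
    Set.EqOn (fun ω => Y t ω - Y s ω) (fun ω => Y0 t ω - Y0 s ω) {ω | D ω = 0} := by
  intro ω hω
  simp only [hYobs, (hD0G ω).1 hω, if_pos (Nat.lt_succ_of_le hs), if_pos (Nat.lt_succ_of_le ht)]

end DiD

theorem ate_gtd_identified_never_treated_general
    {Ω : Type*} [MeasurableSpace Ω] (P : Measure Ω) [IsProbabilityMeasure P]
    (T : ℕ)
    (Dpos : Finset ℝ)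
    (D : Ω → ℝ) (hD : Measurable D)
    (G : Ω → ℕ) (hG : Measurable G)
    (hDval : ∀ ω, D ω = 0 ∨ D ω ∈ Dpos)
    (hD0G : ∀ ω, D ω = 0 ↔ G ω = T + 1)
    (Y0 : ℕ → Ω → ℝ) (hY0i : ∀ t, Integrable (Y0 t) P)
    (Ypo : ℕ → ℕ → ℝ → Ω → ℝ)
    (hYpoi : ∀ t g dd, Integrable (Ypo t g dd) P)
    (Y : ℕ → Ω → ℝ)
    (hYobs : ∀ t ω, Y t ω = if t < G ω then Y0 t ω else Ypo t (G ω) (D ω) ω)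
    (hSPT : ∀ g : ℕ, 2 ≤ g → g ≤ T → ∀ t : ℕ, g ≤ t → t ≤ T → ∀ dd ∈ Dpos,
      cExp P (fun ω => Ypo t g dd ω - Y0 (t - 1) ω) {ω | G ω = g ∧ D ω = dd} =
        cExp P (fun ω => Ypo t g dd ω - Y0 (t - 1) ω) {ω | G ω = g} ∧
      cExp P (fun ω => Y0 t ω - Y0 (t - 1) ω) {ω | G ω = g ∧ D ω = dd} =
        cExp P (fun ω => Y0 t ω - Y0 (t - 1) ω) {ω | D ω = 0}) :
    ∀ g : ℕ, 2 ≤ g → g ≤ T → ∀ t : ℕ, g ≤ t → t ≤ T → ∀ dd ∈ Dpos,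
      cExp P (fun ω => Ypo t g dd ω - Y0 t ω) {ω | G ω = g} =
        cExp P (fun ω => Y t ω - Y (g - 1) ω) {ω | G ω = g ∧ D ω = dd} -
          cExp P (fun ω => Y t ω - Y (g - 1) ω) {ω | D ω = 0} := by
  intro g hg2 hgT t hgt htT dd hdd
  have hpre_trends : cExp P (fun ω => Y0 (t - 1) ω - Y0 (g - 1) ω) {ω | G ω = g ∧ D ω = dd} =
      cExp P (fun ω => Y0 (t - 1) ω - Y0 (g - 1) ω) {ω | D ω = 0} := by
    refine cExp_sub_eq_of_increments_eq hY0i (by omega) fun i hi => ?_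
    rw [Finset.mem_Ico] at hi
    simpa using (hSPT g hg2 hgT (i + 1) (by omega) (by omega) dd hdd).2
  have htrend_group : cExp P (fun ω => Y0 t ω - Y0 (t - 1) ω) {ω | G ω = g} =
      cExp P (fun ω => Y0 t ω - Y0 (t - 1) ω) {ω | D ω = 0} :=
    cExp_group_eq_of_forall_dose_cells hD hG hDval hD0G (by omega) ⟨dd, hdd⟩
      ((hY0i t).sub (hY0i (t - 1)))
      fun d hd => (hSPT g hg2 hgT t hgt htT d hd).2
  have hcell : MeasurableSet {ω | G ω = g ∧ D ω = dd} :=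
    (hG (measurableSet_singleton g)).inter (hD (measurableSet_singleton dd))
  have hnever : MeasurableSet {ω | D ω = 0} := hD (measurableSet_singleton 0)
  rw [eq_sub_of_add_eq (cExp_sub_add_sub_cancel _ (hYpoi t g dd) (hY0i t) (hY0i (t - 1))),
    cExp_congr hcell (observed_sub_eqOn_dose_cell hYobs (by omega) hgt dd),
    cExp_congr hnever (observed_sub_eqOn_never_treated hYobs hD0G (by omega) htT),
    ← cExp_sub_add_sub_cancel _ (hYpoi t g dd) (hY0i (t - 1)) (hY0i (g - 1)),
    ← cExp_sub_add_sub_cancel {ω | D ω = 0} (hY0i t) (hY0i (t - 1)) (hY0i (g - 1)),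
    (hSPT g hg2 hgT t hgt htT dd hdd).1, hpre_trends, htrend_group]
  ring

/-- Under strong parallel trends with respect to the never-treated
group in post-treatment periods, for every group `g ∈ {2,…,T}`, period `t` with
`g ≤ t ≤ T`, and dose `d ∈ 𝒟₊`, the group-time ATE is identified by comparison with
the never-treated group:
`ATE(g,t,d) = E[Y_t − Y_{g−1} | G = g, D = d] − E[Y_t − Y_{g−1} | D = 0]`. -/
theorem ate_gtd_identified_never_treated
    {Ω : Type*} [MeasurableSpace Ω] (P : Measure Ω) [IsProbabilityMeasure P]
    (T : ℕ) (hT : 2 ≤ T)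
    (Dpos : Finset ℝ) (hDposNe : Dpos.Nonempty) (hDposPos : ∀ d ∈ Dpos, (0 : ℝ) < d)
    (D : Ω → ℝ) (hD : Measurable D)
    (G : Ω → ℕ) (hG : Measurable G)
    (hGrange : ∀ ω, 2 ≤ G ω ∧ G ω ≤ T + 1)
    (hDval : ∀ ω, D ω = 0 ∨ D ω ∈ Dpos)
    (hD0G : ∀ ω, D ω = 0 ↔ G ω = T + 1)
    (hpNever : 0 < P {ω | G ω = T + 1})
    (hpgd : ∀ g : ℕ, 2 ≤ g → g ≤ T → ∀ d ∈ Dpos, 0 < P {ω | G ω = g ∧ D ω = d})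
    (Y0 : ℕ → Ω → ℝ) (hY0m : ∀ t, Measurable (Y0 t)) (hY0i : ∀ t, Integrable (Y0 t) P)
    (Ypo : ℕ → ℕ → ℝ → Ω → ℝ)
    (hYpom : ∀ t g dd, Measurable (Ypo t g dd)) (hYpoi : ∀ t g dd, Integrable (Ypo t g dd) P)
    (hNoAnt : ∀ t g : ℕ, ∀ dd ∈ Dpos, 2 ≤ g → g ≤ T → t < g → Ypo t g dd = Y0 t)
    (Y : ℕ → Ω → ℝ)
    (hYobs : ∀ t ω, Y t ω = if t < G ω then Y0 t ω else Ypo t (G ω) (D ω) ω)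
    (hSPT : ∀ g : ℕ, 2 ≤ g → g ≤ T → ∀ t : ℕ, g ≤ t → t ≤ T → ∀ dd ∈ Dpos,
      cExp P (fun ω => Ypo t g dd ω - Y0 (t - 1) ω) {ω | G ω = g ∧ D ω = dd} =
        cExp P (fun ω => Ypo t g dd ω - Y0 (t - 1) ω) {ω | G ω = g} ∧
      cExp P (fun ω => Y0 t ω - Y0 (t - 1) ω) {ω | G ω = g ∧ D ω = dd} =
        cExp P (fun ω => Y0 t ω - Y0 (t - 1) ω) {ω | D ω = 0}) :
    ∀ g : ℕ, 2 ≤ g → g ≤ T → ∀ t : ℕ, g ≤ t → t ≤ T → ∀ dd ∈ Dpos,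
      cExp P (fun ω => Ypo t g dd ω - Y0 t ω) {ω | G ω = g} =
        cExp P (fun ω => Y t ω - Y (g - 1) ω) {ω | G ω = g ∧ D ω = dd} -
          cExp P (fun ω => Y t ω - Y (g - 1) ω) {ω | D ω = 0} :=
  ate_gtd_identified_never_treated_general P T Dpos D hD G hG hDval hD0G Y0 hY0i Ypo hYpoi Y hYobs
    hSPT
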